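/- For z, w ∈ ℂ and ρ > 0, with a := ρ/(2√2), the Gaussian integral ∫₀¹ exp( (2√2 (z+w̄) ρ + 2ρ²) x − 2ρ² x² ) dx equals √(π/2) · (1/ρ) · exp( z² + w̄² + √2 ρ (z+w̄) + ρ²/2 ) · K^ℂ(z,w), where K^ℂ(z,w) := (e^{2 z w̄}/2) ( erfc(z+w̄−2a) − erfc(z+w̄+2a) ). -/

import Mathlib

open Complex intervalIntegral

/-- The error function, extended to an entire function of a complex variable. -/
noncomputable def cerf (z : ℂ) : ℂ :=
  (2 / Real.sqrt Real.pi) * z * ∫ s in (0:ℝ)..1, Complex.exp (-((s:ℂ) * z)^2)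

/-- The complementary error function `erfc z = 1 − erf z`, entire in `z`. -/
noncomputable def cerfc (z : ℂ) : ℂ := 1 - cerf z

/-- The kernel `K^ℂ(z,w) = (e^(2zw̄)/2)(erfc(z+w̄−2a) − erfc(z+w̄+2a))`. -/
noncomputable def KC (a : ℝ) (z w : ℂ) : ℂ :=
  Complex.exp (2*z*(starRingEnd ℂ w)) / 2 *
    (cerfc (z + starRingEnd ℂ w - 2*(a:ℂ)) - cerfc (z + starRingEnd ℂ w + 2*(a:ℂ)))

/-!
The error function is `2/√π` times the radial primitive `z ∫₀¹ e^{-(sz)²} ds` of the entire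
function `e^{-w²}`. By Morera's theorem an entire function has a global primitive, so its
integral along any segment `[u, u + d]` is the difference of the radial primitives at the
endpoints. Completing the square, the integrand is `e^{u²} e^{-(u + x d)²}` with
`u = -(z + w̄ + 2a)` and `d = 4a = √2 ρ`.
-/

open Real

section Segment

variable {E : Type*} [NormedAddCommGroup E] [NormedSpace ℂ E] [CompleteSpace E]

noncomputable def radialPrimitive (f : ℂ → E) (z : ℂ) : E :=
  z • ∫ s in (0:ℝ)..1, f (s * z)

theorem integral_segment_eq_sub_of_hasDerivAt {f g : ℂ → E} (hg : ∀ z, HasDerivAt g (f z) z)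
    (hf : Continuous f) (u d : ℂ) :
    d • ∫ t in (0:ℝ)..1, f (u + t * d) = g (u + d) - g u := by
  have hderiv (t : ℝ) : HasDerivAt (fun t : ℝ => g (u + t * d)) (d • f (u + t * d)) t := by
    have hline : HasDerivAt (fun t : ℝ => u + t * d) d t := by
      simpa using (((hasDerivAt_id t).ofReal_comp).mul_const d).const_add u
    exact (hg _).scomp t hline
  simpa using integral_eq_sub_of_hasDerivAt (fun t _ => hderiv t)
    ((by fun_prop : Continuous fun t : ℝ => d • f (u + t * d)).intervalIntegrable 0 1)

theorem Differentiable.smul_integral_segment_eq_radialPrimitive_sub {f : ℂ → E}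
    (hf : Differentiable ℂ f) (u d : ℂ) :
    d • ∫ t in (0:ℝ)..1, f (u + t * d) = radialPrimitive f (u + d) - radialPrimitive f u := by
  obtain ⟨g, hg⟩ := hf.isExactOn_univ
  have hg' (z : ℂ) : HasDerivAt g (f z) z := hg z (Set.mem_univ z)
  have hradial (z : ℂ) : radialPrimitive f z = g z - g 0 := by
    simpa [radialPrimitive, mul_comm] using
      integral_segment_eq_sub_of_hasDerivAt hg' hf.continuous 0 z
  rw [integral_segment_eq_sub_of_hasDerivAt hg' hf.continuous, hradial, hradial]
  abel

end Segment

theorem cerf_eq_radialPrimitive (z : ℂ) :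
    cerf z = 2 / √π * radialPrimitive (fun w => cexp (-w ^ 2)) z := by
  rw [cerf, radialPrimitive, smul_eq_mul]
  ring

theorem cerf_neg (z : ℂ) : cerf (-z) = -cerf z := by
  simp only [cerf, mul_neg, neg_mul, neg_sq]

theorem mul_integral_exp_neg_sq_affine (u d : ℂ) :
    d * ∫ t in (0:ℝ)..1, cexp (-(u + t * d) ^ 2) = √π / 2 * (cerf (u + d) - cerf u) := by
  have hπ : (√π : ℂ) ≠ 0 := ofReal_ne_zero.mpr (Real.sqrt_pos.mpr Real.pi_pos).ne'
  rw [← smul_eq_mul, (by fun_prop : Differentiable ℂ fun w : ℂ => cexp (-w ^ 2))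
    |>.smul_integral_segment_eq_radialPrimitive_sub, cerf_eq_radialPrimitive,
    cerf_eq_radialPrimitive]
  field_simp

theorem integral_exp_quadratic_eq_cerf_sub (ζ : ℂ) {a : ℂ} (ha : a ≠ 0) :
    ∫ x in (0:ℝ)..1, cexp (8 * a * (ζ + 2 * a) * x - 16 * a ^ 2 * x ^ 2)
      = √π / (8 * a) * cexp ((ζ + 2 * a) ^ 2) * (cerf (ζ + 2 * a) - cerf (ζ - 2 * a)) := by
  have hsquare (x : ℝ) : 8 * a * (ζ + 2 * a) * x - 16 * a ^ 2 * x ^ 2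
      = (ζ + 2 * a) ^ 2 + -(-(ζ + 2 * a) + x * (4 * a)) ^ 2 := by ring
  have herf := mul_integral_exp_neg_sq_affine (-(ζ + 2 * a)) (4 * a)
  rw [show -(ζ + 2 * a) + 4 * a = -(ζ - 2 * a) by ring, cerf_neg, cerf_neg, mul_comm] at herf
  simp_rw [hsquare, Complex.exp_add, intervalIntegral.integral_const_mul]
  rw [eq_div_of_mul_eq (mul_ne_zero (by norm_num) ha) herf]
  field_simp
  ring

/-- The Gaussian integral evaluation, with `a = ρ/(2√2)`. -/
theorem gaussian_integral_eq_KC (ρ : ℝ) (hρ : 0 < ρ) (z w : ℂ) :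
    ∫ x in (0:ℝ)..1,
        Complex.exp ((2*Real.sqrt 2*(z + starRingEnd ℂ w)*(ρ:ℂ) + 2*(ρ:ℂ)^2) * (x:ℂ)
          - 2*(ρ:ℂ)^2*(x:ℂ)^2)
      = (Real.sqrt (Real.pi/2) : ℂ) * (1/(ρ:ℂ)) *
          Complex.exp (z^2 + (starRingEnd ℂ w)^2 + Real.sqrt 2*(ρ:ℂ)*(z + starRingEnd ℂ w)
            + (ρ:ℂ)^2/2) *
          KC (ρ/(2*Real.sqrt 2)) z w := by
  set ζ := z + starRingEnd ℂ w
  set a : ℂ := ((ρ / (2 * √2) : ℝ) : ℂ)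
  have hsqrt2 : ((√2 : ℝ) : ℂ) ^ 2 = 2 := by norm_cast; simp
  have hρa : (√2 : ℂ) * ρ = 4 * a := by
    simp only [a]; push_cast; field_simp; linear_combination 2 * (ρ : ℂ) * hsqrt2
  have ha : a ≠ 0 := by simp only [a]; norm_cast; positivity
  have hexponent (x : ℝ) : (2 * √2 * ζ * ρ + 2 * (ρ : ℂ) ^ 2) * x - 2 * (ρ : ℂ) ^ 2 * x ^ 2
      = 8 * a * (ζ + 2 * a) * x - 16 * a ^ 2 * x ^ 2 := by
    linear_combination (2 * ζ * x + ((√2 : ℂ) * ρ + 4 * a) * (x - x ^ 2)) * hρa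
      - (ρ : ℂ) ^ 2 * (x - x ^ 2) * hsqrt2
  have hexp : cexp (z ^ 2 + (starRingEnd ℂ w) ^ 2 + √2 * ρ * ζ + (ρ : ℂ) ^ 2 / 2)
      * cexp (2 * z * starRingEnd ℂ w) = cexp ((ζ + 2 * a) ^ 2) := by
    rw [← Complex.exp_add]
    congr 1
    linear_combination (ζ + (√2 : ℂ) * ρ / 4 + a) * hρa - (ρ : ℂ) ^ 2 / 4 * hsqrt2
  have hsqrt_pi : ((√(π / 2) : ℝ) : ℂ) = √π / √2 := by
    rw [Real.sqrt_div' _ zero_le_two]; push_cast; rfl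
  simp_rw [hexponent]
  rw [integral_exp_quadratic_eq_cerf_sub ζ ha, KC, cerfc, cerfc, hsqrt_pi, ← hexp,
    show 8 * a = 2 * (√2 * ρ) by rw [hρa]; ring]
  field_simp
  ring
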